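/- If w is a rich finite word, then its palindromic closure w^(+) (the shortest palindrome having w as a prefix) is rich. -/

import Mathlib

open List

variable {A : Type*}

/-- All factors (contiguous subwords) of a word, as a list. -/
def Factors (w : List A) : List (List A) := w.tails.flatMap List.inits

/-- The set of distinct palindromic factors of `w` (including the empty word). -/
def palFactors [DecidableEq A] (w : List A) : Finset (List A) :=
  ((Factors w).filter (fun u => decide (u.reverse = u))).toFinset

/-- A word is rich if it has exactly `|w| + 1` distinct palindromic factors. -/
def IsRich [DecidableEq A] (w : List A) : Prop :=
  (palFactors w).card = w.length + 1

/-- The defect of a finite word. -/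
def defect [DecidableEq A] (w : List A) : ℕ :=
  w.length + 1 - (palFactors w).card

/-- `u` is a (finite) factor of the infinite word `z`. -/
def FactorOfInf (u : List A) (z : ℕ → A) : Prop :=
  ∃ i, u = (List.range u.length).map (fun k => z (i + k))

/-- An infinite word is rich if all of its finite factors are rich. -/
def InfRich [DecidableEq A] (z : ℕ → A) : Prop :=
  ∀ u : List A, FactorOfInf u z → IsRich u

/-- The longest palindromic suffix of `w`. -/
def lps [DecidableEq A] (w : List A) : List A :=
  (w.tails.find? (fun u => decide (u.reverse = u))).getD []

/-- The number of occurrences of `u` as a factor of `w` (counted by position). -/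
def occCount [DecidableEq A] (u w : List A) : ℕ :=
  w.tails.countP (fun t => decide (u <+: t))

/-- The periodic infinite word `u^∞`. -/
def periodicWord (u : List A) (hu : u ≠ []) : ℕ → A :=
  fun i => u.get ⟨i % u.length, Nat.mod_lt _ (List.length_pos_of_ne_nil hu)⟩

/-!
Write `w = v ++ c` with `p = v ++ c ++ v.reverse`; minimality of `p` makes `c` the longest
palindromic suffix of `w`. Appending a letter creates at most one new palindromic factor, namely
the new longest palindromic suffix, so in the rich word `w` the suffix `c` occurs nowhere else.
Growing `w` letter by letter towards `p`, each step `v ++ c ++ t.reverse ↦ v ++ c ++ (a :: t).reverse`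
creates the palindrome `a :: t ++ c ++ (a :: t).reverse`, which is new because its centre `c`
would otherwise occur in `w` before its end; so richness is preserved up to `p`.
-/

lemma mem_factors {w x : List A} : x ∈ Factors w ↔ x <:+: w := by
  simp only [Factors, mem_flatMap, mem_tails, mem_inits, infix_iff_prefix_suffix]
  tauto

lemma reverse_append_append_reverse {s : List A} (y : List A) (hs : s.reverse = s) :
    (y ++ s ++ y.reverse).reverse = y ++ s ++ y.reverse := by
  simp [hs]

lemma infix_dropLast_of_append_infix {y c z d : List A} (hd : z.length < d.length)
    (h : c ++ d <:+: y ++ c ++ z) : c <:+: (y ++ c).dropLast := by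
  obtain ⟨α, β, h⟩ := h
  have hlen := congrArg length h
  simp only [length_append] at hlen
  have hpre : α ++ c <+: (y ++ c).dropLast := by
    refine prefix_of_prefix_length_le (l₃ := y ++ c ++ z) ⟨d ++ β, by simp [← h]⟩
      ((dropLast_prefix _).trans (prefix_append _ _)) ?_
    simp only [length_append, length_dropLast]
    omega
  exact (suffix_append α c).isInfix.trans hpre.isInfix

lemma exists_eq_append_append_reverse {w p : List A} (hp : p.reverse = p) (hw : w <+: p)
    (hlen : p.length ≤ 2 * w.length) :
    ∃ v c, w = v ++ c ∧ c.reverse = c ∧ p = v ++ c ++ v.reverse := by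
  obtain ⟨r, rfl⟩ := hw
  have hr : r.reverse <+: w := by
    refine prefix_of_prefix_length_le ⟨w.reverse, ?_⟩ (prefix_append w r) ?_
    · rw [← hp, reverse_append]
    · simp only [length_append, length_reverse] at hlen ⊢
      omega
  obtain ⟨c, rfl⟩ := hr
  refine ⟨r.reverse, c, rfl, ?_, by simp⟩
  simpa using hp

section Palindromes

variable [DecidableEq A]

lemma mem_palFactors {w x : List A} : x ∈ palFactors w ↔ x <:+: w ∧ x.reverse = x := by
  simp [palFactors, mem_factors]

lemma palFactors_mono {w₁ w₂ : List A} (h : w₁ <:+: w₂) : palFactors w₁ ⊆ palFactors w₂ :=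
  fun _ hx ↦ by
    rw [mem_palFactors] at hx ⊢
    exact ⟨hx.1.trans h, hx.2⟩

lemma palFactors_nil : palFactors ([] : List A) = {[]} := by
  ext x
  simp only [mem_palFactors, infix_nil, Finset.mem_singleton, and_iff_left_iff_imp]
  rintro rfl
  rfl

lemma lps_cons (a : A) (w : List A) :
    lps (a :: w) = if (a :: w).reverse = a :: w then a :: w else lps w := by
  unfold lps
  split_ifs with h <;>
    simp only [tails, find?_cons, h, decide_true, decide_false, Option.getD_some]

lemma lps_suffix (w : List A) : lps w <:+ w := by
  induction w with
  | nil => exact suffix_refl _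
  | cons a w ih =>
    rw [lps_cons]
    split_ifs
    exacts [suffix_refl _, ih.trans (suffix_cons a w)]

lemma reverse_lps (w : List A) : (lps w).reverse = lps w := by
  induction w with
  | nil => rfl
  | cons a w ih =>
    rw [lps_cons]
    split_ifs with h
    exacts [h, ih]

lemma length_le_length_lps {s w : List A} (hs : s <:+ w) (hpal : s.reverse = s) :
    s.length ≤ (lps w).length := by
  induction w with
  | nil => simp [suffix_nil.mp hs]
  | cons a w ih =>
    rw [lps_cons]
    split_ifs with h
    · exact hs.length_le
    · rcases suffix_cons_iff.mp hs with rfl | hs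
      · exact absurd hpal h
      · exact ih hs

lemma lps_eq_of_length_le {s w : List A} (hs : s <:+ w) (hpal : s.reverse = s)
    (hlen : (lps w).length ≤ s.length) : lps w = s :=
  (suffix_of_suffix_length_le (lps_suffix w) hs hlen).eq_of_length
    (hlen.antisymm (length_le_length_lps hs hpal))

/-- A palindromic suffix of `x ++ [a]` shorter than the longest one is also a prefix of it,
hence already a factor of `x`. -/
lemma palFactors_concat_subset (x : List A) (a : A) :
    palFactors (x ++ [a]) ⊆ insert (lps (x ++ [a])) (palFactors x) := by
  intro y hy
  rw [mem_palFactors] at hy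
  obtain ⟨hyx, hpal⟩ := hy
  rw [Finset.mem_insert, mem_palFactors]
  rcases infix_concat_iff.mp hyx with hsuf | hinf
  · rcases (length_le_length_lps hsuf hpal).eq_or_lt with hlen | hlen
    · exact .inl (lps_eq_of_length_le hsuf hpal hlen.ge).symm
    · have hpre : y <+: lps (x ++ [a]) := by
        rw [← reverse_suffix, hpal, reverse_lps]
        exact suffix_of_suffix_length_le hsuf (lps_suffix _) hlen.le
      obtain ⟨k, hk, hkx⟩ : ∃ k, lps (x ++ [a]) = k ++ [a] ∧ k <:+ x :=
        (suffix_concat_iff.mp (lps_suffix _)).resolve_left (ne_nil_of_length_pos (by omega))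
      rw [hk, prefix_concat_iff] at hpre
      rcases hpre with rfl | hpre
      · exact absurd hlen (by simp [hk])
      · exact .inr ⟨hpre.isInfix.trans hkx.isInfix, hpal⟩
  · exact .inr ⟨hinf, hpal⟩

lemma card_palFactors_concat_le (x : List A) (a : A) :
    (palFactors (x ++ [a])).card ≤ (palFactors x).card + 1 :=
  (Finset.card_le_card (palFactors_concat_subset x a)).trans (Finset.card_insert_le _ _)

lemma card_palFactors_le (x : List A) : (palFactors x).card ≤ x.length + 1 := by
  induction x using reverseRecOn with
  | nil => simp [palFactors_nil]
  | append_singleton x a ih =>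
    simpa using (card_palFactors_concat_le x a).trans (Nat.add_le_add_right ih 1)

lemma IsRich.concat {x y : List A} {a : A} (hx : IsRich x) (hy : y ∈ palFactors (x ++ [a]))
    (hnew : y ∉ palFactors x) : IsRich (x ++ [a]) := by
  have hsub : insert y (palFactors x) ⊆ palFactors (x ++ [a]) :=
    Finset.insert_subset hy (palFactors_mono (prefix_append x [a]).isInfix)
  have := Finset.card_le_card hsub
  rw [Finset.card_insert_of_notMem hnew, hx] at this
  have := card_palFactors_le (x ++ [a])
  rw [IsRich, length_append, length_singleton] at *
  omega

lemma IsRich.lps_not_infix {x : List A} {a : A} (h : IsRich (x ++ [a])) :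
    ¬ lps (x ++ [a]) <:+: x := by
  intro hx
  have hsub := palFactors_concat_subset x a
  rw [Finset.insert_eq_of_mem (mem_palFactors.mpr ⟨hx, reverse_lps _⟩)] at hsub
  have := (Finset.card_le_card hsub).trans (card_palFactors_le x)
  rw [h, length_append, length_singleton] at this
  omega

lemma isRich_append_append_reverse {v c : List A} (hc : c.reverse = c)
    (hrich : IsRich (v ++ c)) (huniq : ¬ c <:+: (v ++ c).dropLast) :
    ∀ t, t <:+ v → IsRich (v ++ c ++ t.reverse)
  | [], _ => by simpa using hrich
  | a :: t, ht => by
    have ih := isRich_append_append_reverse hc hrich huniq t ((suffix_cons a t).trans ht)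
    obtain ⟨v', rfl⟩ := ht
    rw [reverse_cons, ← append_assoc]
    refine ih.concat (y := a :: t ++ c ++ (a :: t).reverse) ?_ ?_
    · refine mem_palFactors.mpr ⟨⟨v', [], by simp⟩, reverse_append_append_reverse _ hc⟩
    · intro hy
      apply huniq
      refine infix_dropLast_of_append_infix (z := t.reverse) (d := t.reverse ++ [a]) (by simp) ?_
      have hocc := (mem_palFactors.mp hy).1
      rw [reverse_cons] at hocc
      exact (suffix_append (a :: t) _).isInfix.trans (by simpa only [append_assoc] using hocc)

end Palindromes

theorem palindromic_closure_rich [DecidableEq A] (w p : List A)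
    (hrich : IsRich w) (hpal : p.reverse = p) (hpref : w <+: p)
    (hmin : ∀ q : List A, q.reverse = q → w <+: q → p.length ≤ q.length) :
    IsRich p := by
  obtain rfl | ⟨x, a, rfl⟩ := w.eq_nil_or_concat'
  · rwa [eq_nil_of_length_eq_zero (Nat.le_zero.mp (hmin [] rfl (nil_prefix)))]
  have hlen := hmin (x ++ [a] ++ (x ++ [a]).reverse) (by simp) (prefix_append _ _)
  obtain ⟨v, c, hw, hc, rfl⟩ := exists_eq_append_append_reverse hpal hpref
    (by simp only [length_append, length_reverse, length_singleton] at hlen ⊢; omega)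
  have hlps : lps (x ++ [a]) = c := by
    refine lps_eq_of_length_le (hw ▸ suffix_append v c) hc ?_
    -- closing `x ++ [a] = y ++ lps (x ++ [a])` to `y ++ lps _ ++ y.reverse` cannot beat `p`
    obtain ⟨y, hy⟩ := lps_suffix (x ++ [a])
    have := hmin _ (reverse_append_append_reverse y (reverse_lps _)) ⟨y.reverse, by rw [hy]⟩
    have hwlen := congrArg length (hy.trans hw)
    simp only [length_append, length_reverse] at this hwlen
    omega
  have huniq : ¬ c <:+: (v ++ c).dropLast := by
    rw [← hw, dropLast_concat, ← hlps]
    exact hrich.lps_not_infix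
  simpa using isRich_append_append_reverse hc (hw ▸ hrich) huniq v (suffix_refl v)
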